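/- arXiv:2004.05279 — 3 statements merged into one kernel-verified Lean document; each statement's English description precedes it below -/
import Mathlib

section
/- For all x ≥ 0, y > 0, x₀ ≥ 0, y₀ > 0, the function f(x,y) = y·log(1 + x/y) satisfies f(x,y) ≤ f(x₀,y₀) + [log(1 + x₀/y₀) − x₀/(x₀+y₀)]·(y − y₀) + [y₀/(x₀+y₀)]·(x − x₀). -/
/-!
The function `f(x, y) = y log (1 + x / y)` is the perspective of the concave function
`u ↦ log (1 + u)`, so it is jointly concave and positively homogeneous of degree one.
Homogeneity (Euler's identity) makes the tangent plane at `(x₀, y₀)` pass through the origin,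
which turns it into `y log (1 + x₀ / y₀) + (x y₀ - x₀ y) / (x₀ + y₀)`; the inequality is then
the tangent-line bound `log a ≤ log b + (a - b) / b` at `a = 1 + x / y`, `b = 1 + x₀ / y₀`,
scaled by `y`.
-/

namespace Real

theorem log_le_log_add_sub_div {a b : ℝ} (ha : 0 < a) (hb : 0 < b) :
    log a ≤ log b + (a - b) / b := by
  have h := log_le_sub_one_of_pos (div_pos ha hb)
  rw [log_div ha.ne' hb.ne', div_sub_one hb.ne'] at h
  linarith

theorem mul_log_one_add_div_le {x y x₀ y₀ : ℝ} (hxy : 0 < x + y) (hy : 0 < y)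
    (hxy₀ : 0 < x₀ + y₀) (hy₀ : 0 < y₀) :
    y * log (1 + x / y) ≤ y * log (1 + x₀ / y₀) + (x * y₀ - x₀ * y) / (x₀ + y₀) := by
  have ha : 0 < 1 + x / y := by rw [one_add_div hy.ne', add_comm]; exact div_pos hxy hy
  have hb : 0 < 1 + x₀ / y₀ := by rw [one_add_div hy₀.ne', add_comm]; exact div_pos hxy₀ hy₀
  have hscaled : y * ((1 + x / y - (1 + x₀ / y₀)) / (1 + x₀ / y₀))
      = (x * y₀ - x₀ * y) / (x₀ + y₀) := by
    rw [one_add_div hy₀.ne', add_comm x₀]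
    have := hxy₀.ne'
    field_simp
    ring
  calc y * log (1 + x / y)
      ≤ y * (log (1 + x₀ / y₀) + (1 + x / y - (1 + x₀ / y₀)) / (1 + x₀ / y₀)) :=
        mul_le_mul_of_nonneg_left (log_le_log_add_sub_div ha hb) hy.le
    _ = y * log (1 + x₀ / y₀) + (x * y₀ - x₀ * y) / (x₀ + y₀) := by rw [mul_add, hscaled]

end Real

/-- First-order Taylor expansion of f(x,y) = y·log(1 + x/y) at (x₀,y₀) is a
global over-estimator. -/
theorem taylor_overestimates_perspective (x y x₀ y₀ : ℝ)
    (hx : 0 ≤ x) (hy : 0 < y) (hx₀ : 0 ≤ x₀) (hy₀ : 0 < y₀) :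
    y * Real.log (1 + x / y) ≤
      y₀ * Real.log (1 + x₀ / y₀)
        + (Real.log (1 + x₀ / y₀) - x₀ / (x₀ + y₀)) * (y - y₀)
        + (y₀ / (x₀ + y₀)) * (x - x₀) := by
  have hxy₀ : 0 < x₀ + y₀ := by positivity
  calc y * Real.log (1 + x / y)
      ≤ y * Real.log (1 + x₀ / y₀) + (x * y₀ - x₀ * y) / (x₀ + y₀) :=
        Real.mul_log_one_add_div_le (by positivity) hy hxy₀ hy₀
    _ = _ := by
        field_simp
        ring
end

section
/- For fixed a > b > 0 and total number of bits requirement m > 0, the set of feasible pairs (t, p̃) with t > 0, p̃ ≥ 0 satisfying t·log(1 + a·p̃/t) − t·log(1 + b·p̃/t) ≥ m is a convex subset of ℝ². -/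
/-!
The constraint function is the perspective `t * φ (p / t)` of
`φ x = log (1 + a x) - log (1 + b x)`, which is concave on `[0, ∞)` because
`φ' x = (a - b) / ((1 + a x) (1 + b x))` decreases. Perspectives of concave functions are
concave: with `t = α t₁ + β t₂`, the ratio `(α p₁ + β p₂) / t` is the convex combination of
`p₁ / t₁` and `p₂ / t₂` with weights `α t₁ / t` and `β t₂ / t`. A superlevel set of a concave
function is convex.
-/

open Real Set

lemma hasDerivAt_log_one_add_mul_sub_log_one_add_mul {a b x : ℝ} (ha : 1 + a * x ≠ 0)
    (hb : 1 + b * x ≠ 0) :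
    HasDerivAt (fun x => log (1 + a * x) - log (1 + b * x))
      ((a - b) / ((1 + a * x) * (1 + b * x))) x := by
  have hlog : ∀ c : ℝ, 1 + c * x ≠ 0 →
      HasDerivAt (fun x => log (1 + c * x)) (c * 1 / (1 + c * x)) x :=
    fun c hc => (((hasDerivAt_id x).const_mul c).const_add 1).log hc
  refine ((hlog a ha).sub (hlog b hb)).congr_deriv ?_
  rw [mul_one, mul_one, div_sub_div _ _ ha hb]
  ring

lemma concaveOn_log_one_add_mul_sub_log_one_add_mul {a b : ℝ} (hb : 0 ≤ b) (hab : b ≤ a) :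
    ConcaveOn ℝ (Ici 0) (fun x => log (1 + a * x) - log (1 + b * x)) := by
  have ha : 0 ≤ a := hb.trans hab
  have hderiv : ∀ x ∈ Ici (0 : ℝ), HasDerivAt (fun x => log (1 + a * x) - log (1 + b * x))
      ((a - b) / ((1 + a * x) * (1 + b * x))) x := fun x (hx : 0 ≤ x) =>
    hasDerivAt_log_one_add_mul_sub_log_one_add_mul (by positivity) (by positivity)
  refine AntitoneOn.concaveOn_of_deriv (convex_Ici 0)
    (fun x hx => (hderiv x hx).continuousAt.continuousWithinAt)
    (fun x hx => (hderiv x (interior_subset hx)).differentiableAt.differentiableWithinAt) ?_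
  rw [interior_Ici]
  intro x (hx : 0 < x) y (hy : 0 < y) hxy
  rw [(hderiv x hx.le).deriv, (hderiv y hy.le).deriv]
  gcongr

theorem ConcaveOn.perspective {s : Set ℝ} {f : ℝ → ℝ} (hf : ConcaveOn ℝ s f) :
    ConcaveOn ℝ {q : ℝ × ℝ | 0 < q.1 ∧ q.2 / q.1 ∈ s} (fun q => q.1 * f (q.2 / q.1)) := by
  set D := {q : ℝ × ℝ | 0 < q.1 ∧ q.2 / q.1 ∈ s}
  set F := fun q : ℝ × ℝ => q.1 * f (q.2 / q.1)
  have H : ∀ ⦃q⦄, q ∈ D → ∀ ⦃r⦄, r ∈ D → ∀ ⦃α β : ℝ⦄, 0 ≤ α → 0 ≤ β → α + β = 1 →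
      α • q + β • r ∈ D ∧ α • F q + β • F r ≤ F (α • q + β • r) := by
    rintro ⟨t₁, p₁⟩ ⟨ht₁, hs₁⟩ ⟨t₂, p₂⟩ ⟨ht₂, hs₂⟩ α β hα hβ hαβ
    simp only [D, F, Prod.smul_mk, Prod.mk_add_mk, smul_eq_mul, mem_ofPred_eq]
    set t := α * t₁ + β * t₂
    have ht : 0 < t := by simpa using convex_Ioi (0 : ℝ) ht₁ ht₂ hα hβ hαβ
    have hw₁ : 0 ≤ α * t₁ / t := by positivity
    have hw₂ : 0 ≤ β * t₂ / t := by positivity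
    have hw : α * t₁ / t + β * t₂ / t = 1 := by rw [← add_div, div_self ht.ne']
    have hmix : (α * p₁ + β * p₂) / t = α * t₁ / t * (p₁ / t₁) + β * t₂ / t * (p₂ / t₂) := by
      field_simp
    refine ⟨⟨ht, hmix ▸ hf.1 hs₁ hs₂ hw₁ hw₂ hw⟩, ?_⟩
    calc α * (t₁ * f (p₁ / t₁)) + β * (t₂ * f (p₂ / t₂))
        = t * (α * t₁ / t * f (p₁ / t₁) + β * t₂ / t * f (p₂ / t₂)) := by field_simp
      _ ≤ t * f (α * t₁ / t * (p₁ / t₁) + β * t₂ / t * (p₂ / t₂)) :=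
        mul_le_mul_of_nonneg_left (hf.2 hs₁ hs₂ hw₁ hw₂ hw) ht.le
      _ = t * f ((α * p₁ + β * p₂) / t) := by rw [hmix]
  exact ⟨fun q hq r hr α β hα hβ hαβ => (H hq hr hα hβ hαβ).1,
    fun q hq r hr α β hα hβ hαβ => (H hq hr hα hβ hαβ).2⟩

theorem secure_offloading_constraint_convex_general (a b m : ℝ) (hb : 0 < b)
    (hab : b < a) :
    Convex ℝ {q : ℝ × ℝ | 0 < q.1 ∧ 0 ≤ q.2 ∧
      m ≤ q.1 * Real.log (1 + a * q.2 / q.1) - q.1 * Real.log (1 + b * q.2 / q.1)} := by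
  convert ((concaveOn_log_one_add_mul_sub_log_one_add_mul hb.le hab.le).perspective).convex_ge m
    using 1
  ext ⟨t, p⟩
  simp only [mem_ofPred_eq, mem_Ici, mul_div_assoc, mul_sub]
  constructor
  · rintro ⟨ht, hp, hm⟩
    exact ⟨⟨ht, div_nonneg hp ht.le⟩, hm⟩
  · rintro ⟨⟨ht, hp⟩, hm⟩
    exact ⟨ht, by simpa using (le_div_iff₀ ht).1 hp, hm⟩

/-- For a > b > 0 and m > 0, the set of (t,p̃) with t > 0, p̃ ≥ 0 and
t·log(1+a·p̃/t) − t·log(1+b·p̃/t) ≥ m is convex. -/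
theorem secure_offloading_constraint_convex (a b m : ℝ) (hb : 0 < b)
    (hab : b < a) (hm : 0 < m) :
    Convex ℝ {q : ℝ × ℝ | 0 < q.1 ∧ 0 ≤ q.2 ∧
      m ≤ q.1 * Real.log (1 + a * q.2 / q.1) - q.1 * Real.log (1 + b * q.2 / q.1)} :=
  secure_offloading_constraint_convex_general a b m hb hab
end

section
/- The constraint set defined by τ ≥ b·p̃, N ≤ a·p̃, and t·log(1 + N/t) − t·log(1 + τ/t) ≥ m/B (in variables t > 0, p̃, τ, N ≥ 0) projects onto the same set of (t, p̃) as the original constraint t·log(1 + a·p̃/t) − t·log(1 + b·p̃/t) ≥ m/B, provided a > b > 0 and m, B > 0. -/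
open Real Set

theorem monotoneOn_mul_log_one_add_div {t : ℝ} (ht : 0 < t) :
    MonotoneOn (fun x => t * log (1 + x / t)) (Ioi (-t)) := by
  intro x hx y _ hxy
  have hx_pos : 0 < 1 + x / t := by
    have : -1 < x / t := by rw [lt_div_iff₀ ht]; linarith [mem_Ioi.mp hx]
    linarith
  have hlog : log (1 + x / t) ≤ log (1 + y / t) :=
    log_le_log hx_pos (by gcongr)
  exact mul_le_mul_of_nonneg_left hlog ht.le

theorem mul_log_sub_mul_log_le_of_le {t τ τ' N N' : ℝ} (ht : 0 < t) (hτ' : -t < τ')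
    (hτ : τ' ≤ τ) (hN : -t < N) (hN' : N ≤ N') :
    t * log (1 + N / t) - t * log (1 + τ / t) ≤
      t * log (1 + N' / t) - t * log (1 + τ' / t) := by
  have hmono := monotoneOn_mul_log_one_add_div ht
  have hgain : t * log (1 + N / t) ≤ t * log (1 + N' / t) :=
    hmono hN (hN.trans_le hN') hN'
  have hleak : t * log (1 + τ' / t) ≤ t * log (1 + τ / t) :=
    hmono hτ' (hτ'.trans_le hτ) hτ
  linarith

theorem auxiliary_reformulation_equiv_general (a b m B : ℝ) (hb : 0 < b) (hab : b < a) :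
    {q : ℝ × ℝ | 0 < q.1 ∧ 0 ≤ q.2 ∧ ∃ τ N : ℝ, 0 ≤ τ ∧ 0 ≤ N ∧
        b * q.2 ≤ τ ∧ N ≤ a * q.2 ∧
        m / B ≤ q.1 * Real.log (1 + N / q.1) - q.1 * Real.log (1 + τ / q.1)} =
      {q : ℝ × ℝ | 0 < q.1 ∧ 0 ≤ q.2 ∧
        m / B ≤ q.1 * Real.log (1 + a * q.2 / q.1)
          - q.1 * Real.log (1 + b * q.2 / q.1)} := by
  ext ⟨t, p⟩
  simp only [mem_ofPred_eq]
  constructor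
  · rintro ⟨ht, hp, τ, N, -, hN, hbτ, hNa, hrate⟩
    have hneg : -t < 0 := neg_lt_zero.mpr ht
    exact ⟨ht, hp, hrate.trans (mul_log_sub_mul_log_le_of_le ht
      (hneg.trans_le (mul_nonneg hb.le hp)) hbτ (hneg.trans_le hN) hNa)⟩
  · rintro ⟨ht, hp, hrate⟩
    exact ⟨ht, hp, b * p, a * p, mul_nonneg hb.le hp, mul_nonneg (hb.trans hab).le hp,
      le_rfl, le_rfl, hrate⟩

/-- The auxiliary-variable reformulation (τ ≥ b·p̃, N ≤ a·p̃, rate constraint in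
τ, N) projects onto the same set of (t, p̃) as the original secrecy constraint. -/
theorem auxiliary_reformulation_equiv (a b m B : ℝ) (hb : 0 < b) (hab : b < a)
    (hm : 0 < m) (hB : 0 < B) :
    {q : ℝ × ℝ | 0 < q.1 ∧ 0 ≤ q.2 ∧ ∃ τ N : ℝ, 0 ≤ τ ∧ 0 ≤ N ∧
        b * q.2 ≤ τ ∧ N ≤ a * q.2 ∧
        m / B ≤ q.1 * Real.log (1 + N / q.1) - q.1 * Real.log (1 + τ / q.1)} =
      {q : ℝ × ℝ | 0 < q.1 ∧ 0 ≤ q.2 ∧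
        m / B ≤ q.1 * Real.log (1 + a * q.2 / q.1)
          - q.1 * Real.log (1 + b * q.2 / q.1)} :=
  auxiliary_reformulation_equiv_general a b m B hb hab
end
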